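/- arXiv:2310.12130 — 3 statements merged into one kernel-verified Lean document; each statement's English description precedes it below -/
import Mathlib

section
/- Let λ_1,…,λ_n and λ̃_1,…,λ̃_n ∈ ℂ^k, K_j = λ_j λ̃_j^T, and 𝔰_J = det(Σ_{j∈J} K_j) for k-element subsets J ⊆ {1,…,n}. If the matrix K_1 + … + K_n has rank at most k−2 (momentum conservation), then for every fixed index j ∈ {1,…,n}, the sum Σ_{J ∋ j, |J|=k} 𝔰_J = 0. -/
/-!
Expanding `det (∑_{i ∈ S} λ_i λ̃_iᵀ)` multilinearly in the rows, a term picks one summand per row;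
only injective choices survive, and grouping them by their image gives
`det (∑_{i ∈ S} K_i) = ∑_{J ⊆ S, |J| = k} 𝔰_J`. Applied to `S = {1,…,n}` and `S = {1,…,n} ∖ {j}`,
this writes the sum over `J ∋ j` as a difference of two determinants. Both vanish: `∑ K_i` has
rank at most `k − 2`, and removing the rank-one `K_j` raises the rank by at most one.
-/

open Finset Function
open Fintype (piFinset mem_piFinset)

namespace Matrix

section rank

variable {K m n : Type*} [Field K] [Fintype n]

theorem rank_add_le (A B : Matrix m n K) : (A + B).rank ≤ A.rank + B.rank := by
  have hle : LinearMap.range (A + B).mulVecLin ≤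
      LinearMap.range A.mulVecLin ⊔ LinearMap.range B.mulVecLin := by
    rintro _ ⟨x, rfl⟩
    rw [mulVecLin_add]
    exact Submodule.add_mem_sup ⟨x, rfl⟩ ⟨x, rfl⟩
  exact (Submodule.finrank_mono hle).trans (Submodule.finrank_add_le_finrank_add_finrank _ _)

theorem det_eq_zero_of_rank_lt {R : Type*} [CommRing R] [IsDomain R] [DecidableEq n]
    {A : Matrix n n R} (h : A.rank < Fintype.card n) : A.det = 0 := by
  by_contra hA
  exact h.ne (rank_of_det_ne_zero hA)

end rank

end Matrix

section injective

variable {ι m β : Type*} [Fintype m] [DecidableEq m] [DecidableEq ι] [AddCommMonoid β]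

theorem Finset.filter_injective_piFinset_image_eq {S J : Finset ι} (hJS : J ⊆ S)
    (hJ : #J = Fintype.card m) :
    ((piFinset fun _ : m => S).filter Injective).filter (fun f => univ.image f = J) =
      (piFinset fun _ : m => J).filter Injective := by
  ext f
  simp only [mem_filter, mem_piFinset]
  constructor
  · rintro ⟨⟨-, hinj⟩, rfl⟩
    exact ⟨fun r => mem_image_of_mem f (mem_univ r), hinj⟩
  · rintro ⟨hfJ, hinj⟩
    have hsub : univ.image f ⊆ J := by
      rintro _ hx
      obtain ⟨r, -, rfl⟩ := mem_image.1 hx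
      exact hfJ r
    refine ⟨⟨fun r => hJS (hfJ r), hinj⟩, eq_of_subset_of_card_le hsub ?_⟩
    rw [card_image_of_injective _ hinj, card_univ, hJ]

theorem Finset.sum_piFinset_eq_sum_powersetCard (T : (m → ι) → β)
    (hT : ∀ f, ¬ Injective f → T f = 0) (S : Finset ι) :
    ∑ f ∈ piFinset fun _ : m => S, T f =
      ∑ J ∈ S.powersetCard (Fintype.card m), ∑ f ∈ piFinset fun _ : m => J, T f := by
  have hinj (S : Finset ι) : ∑ f ∈ piFinset fun _ : m => S, T f =
      ∑ f ∈ (piFinset fun _ : m => S).filter Injective, T f :=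
    (sum_filter_of_ne fun f _ hf => not_not.1 (mt (hT f) hf)).symm
  have himage : ∀ f ∈ (piFinset fun _ : m => S).filter Injective,
      univ.image f ∈ S.powersetCard (Fintype.card m) := by
    intro f hf
    simp only [mem_filter, mem_piFinset] at hf
    rw [mem_powersetCard, card_image_of_injective _ hf.2, card_univ]
    refine ⟨fun _ hx => ?_, rfl⟩
    obtain ⟨r, -, rfl⟩ := mem_image.1 hx
    exact hf.1 r
  rw [hinj, ← sum_fiberwise_of_maps_to himage]
  refine sum_congr rfl fun J hJ => ?_
  rw [mem_powersetCard] at hJ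
  rw [hinj, filter_injective_piFinset_image_eq hJ.1 hJ.2]

end injective

namespace Matrix

variable {ι m R : Type*} [Fintype m] [DecidableEq m] [CommRing R]

theorem det_sum_vecMulVec (a b : ι → m → R) (S : Finset ι) :
    (∑ i ∈ S, vecMulVec (a i) (b i)).det =
      ∑ f ∈ piFinset fun _ : m => S, (∏ r, a (f r) r) * (of fun r => b (f r)).det := by
  have hrows : ∑ i ∈ S, vecMulVec (a i) (b i) = of fun r => ∑ i ∈ S, a i r • b i := by
    ext r c
    simp [sum_apply, vecMulVec_apply]
  rw [hrows]
  change detRowAlternating.toMultilinearMap (fun r => ∑ i ∈ S, a i r • b i) = _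
  rw [MultilinearMap.map_sum_finset]
  refine sum_congr rfl fun f _ => ?_
  exact (detRowAlternating.map_smul_univ (fun r => a (f r) r) fun r => b (f r)).trans
    (smul_eq_mul ..)

theorem det_of_comp_eq_zero_of_not_injective (b : ι → m → R) {f : m → ι} (hf : ¬ Injective f) :
    (of fun r => b (f r)).det = 0 := by
  obtain ⟨r, s, hfrs, hrs⟩ := not_injective_iff.1 hf
  exact det_zero_of_row_eq hrs (congrArg b hfrs)

theorem det_sum_vecMulVec_eq_sum_powersetCard [DecidableEq ι] (a b : ι → m → R) (S : Finset ι) :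
    (∑ i ∈ S, vecMulVec (a i) (b i)).det =
      ∑ J ∈ S.powersetCard (Fintype.card m), (∑ i ∈ J, vecMulVec (a i) (b i)).det := by
  simp only [det_sum_vecMulVec]
  exact sum_piFinset_eq_sum_powersetCard _
    (fun f hf => by rw [det_of_comp_eq_zero_of_not_injective b hf, mul_zero]) S

end Matrix

theorem Finset.powersetCard_filter_notMem {α : Type*} [DecidableEq α] (s : Finset α) (k : ℕ)
    (a : α) : (s.powersetCard k).filter (a ∉ ·) = (s.erase a).powersetCard k := by
  ext J
  simp only [mem_filter, mem_powersetCard, subset_erase]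
  tauto

open Matrix

/-- Momentum conservation for CEGM invariants: if `K_j = λ_j λ̃_j^T` and
`K_1 + ⋯ + K_n` has rank at most `k − 2`, then for every fixed index `j`,
`∑_{J ∋ j, |J| = k} 𝔰_J = 0`, where `𝔰_J = det (∑_{i∈J} K_i)`. -/
theorem stmt1 (k n : ℕ) (hk : 2 ≤ k) (lam lamT : Fin n → Fin k → ℂ)
    (K : Fin n → Matrix (Fin k) (Fin k) ℂ)
    (hK : ∀ j, K j = Matrix.vecMulVec (lam j) (lamT j))
    (hmom : Matrix.rank (∑ j, K j) ≤ k - 2) (j : Fin n) :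
    ∑ J ∈ (Finset.powersetCard k (Finset.univ : Finset (Fin n))).filter (fun J => j ∈ J),
      Matrix.det (∑ i ∈ J, K i) = 0 := by
  obtain rfl : K = fun i => vecMulVec (lam i) (lamT i) := funext hK
  beta_reduce at hmom ⊢
  have hexpand (S : Finset (Fin n)) := det_sum_vecMulVec_eq_sum_powersetCard lam lamT S
  rw [Fintype.card_fin] at hexpand
  have hfull : (∑ i, vecMulVec (lam i) (lamT i)).det = 0 :=
    det_eq_zero_of_rank_lt (by rw [Fintype.card_fin]; omega)
  have herase : (∑ i ∈ univ.erase j, vecMulVec (lam i) (lamT i)).det = 0 := by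
    refine det_eq_zero_of_rank_lt ?_
    have hsum : ∑ i ∈ univ.erase j, vecMulVec (lam i) (lamT i) =
        ∑ i, vecMulVec (lam i) (lamT i) + vecMulVec (-lam j) (lamT j) := by
      rw [← add_sum_erase univ _ (mem_univ j), neg_vecMulVec]
      abel
    rw [hsum]
    calc _ ≤ _ + _ := rank_add_le _ _
      _ ≤ (k - 2) + 1 := add_le_add hmom (rank_vecMulVec_le _ _)
      _ < Fintype.card (Fin k) := by rw [Fintype.card_fin]; omega
  have hsplit := sum_filter_add_sum_filter_not (univ.powersetCard k) (j ∈ ·)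
    fun J => (∑ i ∈ J, vecMulVec (lam i) (lamT i)).det
  rwa [powersetCard_filter_notMem, ← hexpand, herase, add_zero, ← hexpand, hfull] at hsplit
end

section
/- Let p_J denote the 3×3 minors of a generic 3×6 real matrix (all maximal minors nonzero). Then the following identity of rational functions holds: p_{124}p_{125}/(p_{123}p_{126}p_{134}p_{145}p_{156}p_{234}p_{245}p_{256}) + p_{124}/(p_{126}p_{134}p_{145}p_{165}p_{234}p_{236}p_{245}) + p_{124}/(p_{123}p_{134}p_{145}p_{156}p_{234}p_{246}p_{265}) + p_{124}/(p_{123}p_{134}p_{145}p_{156}p_{236}p_{245}p_{264}) = 0, where p with a reordered index triple is defined by antisymmetry, e.g. p_{165} = −p_{156}, p_{265} = −p_{256}, p_{264} = −p_{246}. -/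
/-!
Over the common denominator, the product of the ten distinct minors that occur, the numerator of
the sum is `p 0 1 3` times the cubic
`p₀₁₄ p₁₂₅ p₁₃₅ - p₀₁₂ p₁₃₅ p₁₄₅ - p₀₁₅ p₁₂₅ p₁₃₄ - p₀₁₅ p₁₂₃ p₁₄₅`.
This cubic is a combination of two three-term Plücker relations, both among minors containing
column `1`: the one on the columns `0 2 4 5` and the one on the columns `2 3 4 5`.
-/

namespace Matrix

variable {R n : Type*} [CommRing R] (M : Matrix (Fin 3) n R)

def minor3 (i j k : n) : R := det (of fun r (c : Fin 3) => M r (![i, j, k] c))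

theorem minor3_swap_left (i j k : n) : M.minor3 j i k = -M.minor3 i j k := by
  simp only [minor3, det_fin_three, of_apply, cons_val]
  ring

theorem minor3_swap_right (i j k : n) : M.minor3 i k j = -M.minor3 i j k := by
  simp only [minor3, det_fin_three, of_apply, cons_val]
  ring

theorem minor3_plucker (a b c d e : n) :
    M.minor3 a b c * M.minor3 a d e - M.minor3 a b d * M.minor3 a c e +
      M.minor3 a b e * M.minor3 a c d = 0 := by
  simp only [minor3, det_fin_three, of_apply, cons_val]
  ring

end Matrix

theorem decoupling_of_cubic_relation {K : Type*} [Field K]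
    (p012 p013 p014 p015 p023 p034 p045 p123 p125 p134 p135 p145 : K)
    (h012 : p012 ≠ 0) (h015 : p015 ≠ 0) (h023 : p023 ≠ 0) (h034 : p034 ≠ 0) (h045 : p045 ≠ 0)
    (h123 : p123 ≠ 0) (h125 : p125 ≠ 0) (h134 : p134 ≠ 0) (h135 : p135 ≠ 0) (h145 : p145 ≠ 0)
    (hrel : p014 * p125 * p135 - p012 * p135 * p145 - p015 * p125 * p134 -
      p015 * p123 * p145 = 0) :
    p013 * p014 / (p012 * p015 * p023 * p034 * p045 * p123 * p134 * p145) +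
      p013 / (p015 * p023 * p034 * -p045 * p123 * p125 * p134) +
      p013 / (p012 * p023 * p034 * p045 * p123 * p135 * -p145) +
      p013 / (p012 * p023 * p034 * p045 * p125 * p134 * -p135) = 0 := by
  field_simp
  linear_combination p013 * hrel

/-- The decoupling identity among CEGM integrands
`ℐ_{((23456),(13456))} + ℐ_{((23456),(13465))} + ℐ_{((23456),(13645))} + ℐ_{((23456),(16345))} = 0`
for the 3×3 minors `p_{ijk}` of a generic 3×6 real matrix. Indices are
0-based (`p 0 1 3` is `p_{124}`); antisymmetry (e.g. `p_{165} = −p_{156}`) holds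
automatically since `p` is a determinant of the listed columns. -/
theorem stmt14 (M : Matrix (Fin 3) (Fin 6) ℝ)
    (p : Fin 6 → Fin 6 → Fin 6 → ℝ)
    (hp : ∀ i j k, p i j k = Matrix.det (Matrix.of fun r (c : Fin 3) => M r (![i, j, k] c)))
    (hne : ∀ i j k, i < j → j < k → p i j k ≠ 0) :
    p 0 1 3 * p 0 1 4 /
        (p 0 1 2 * p 0 1 5 * p 0 2 3 * p 0 3 4 * p 0 4 5 * p 1 2 3 * p 1 3 4 * p 1 4 5) +
      p 0 1 3 / (p 0 1 5 * p 0 2 3 * p 0 3 4 * p 0 5 4 * p 1 2 3 * p 1 2 5 * p 1 3 4) +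
      p 0 1 3 / (p 0 1 2 * p 0 2 3 * p 0 3 4 * p 0 4 5 * p 1 2 3 * p 1 3 5 * p 1 5 4) +
      p 0 1 3 / (p 0 1 2 * p 0 2 3 * p 0 3 4 * p 0 4 5 * p 1 2 5 * p 1 3 4 * p 1 5 3) = 0 := by
  obtain rfl : p = M.minor3 := funext fun i => funext fun j => funext fun k => hp i j k
  have plucker_0245 := M.minor3_plucker 1 0 2 4 5
  simp only [M.minor3_swap_left 0 1] at plucker_0245
  rw [M.minor3_swap_right 0 4 5, M.minor3_swap_right 1 4 5, M.minor3_swap_right 1 3 5]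
  refine decoupling_of_cubic_relation _ _ _ _ _ _ _ _ _ _ _ _
    (hne 0 1 2 (by decide) (by decide)) (hne 0 1 5 (by decide) (by decide))
    (hne 0 2 3 (by decide) (by decide)) (hne 0 3 4 (by decide) (by decide))
    (hne 0 4 5 (by decide) (by decide)) (hne 1 2 3 (by decide) (by decide))
    (hne 1 2 5 (by decide) (by decide)) (hne 1 3 4 (by decide) (by decide))
    (hne 1 3 5 (by decide) (by decide)) (hne 1 4 5 (by decide) (by decide)) ?_
  linear_combination
    M.minor3 1 3 5 * plucker_0245 - M.minor3 0 1 5 * M.minor3_plucker 1 2 3 4 5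
end

section
/- Let p_J denote the 3×3 minors of a generic 3×6 matrix. Then the type I CEGM integrand decomposition holds: p_{146}/(p_{123}p_{126}p_{134}p_{156}p_{264}p_{354}p_{465}) + 1/(p_{123}p_{126}p_{134}p_{256}p_{345}p_{456}) = ± 1/(p_{123}p_{134}p_{156}p_{246}p_{256}p_{345}) (with a consistent choice of sign), as rational functions on the Grassmannian G(3,6), where reordered indices obey antisymmetry (p_{264} = p_{246} up to sign, etc.). -/
/-!
Indices are 1-based as in the paper. On the chart where all minors are nonzero, flip the three
misordered minors `p₂₆₄, p₃₅₄, p₄₆₅` into increasing order (three sign changes) and put the two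
terms over a common denominator.
The numerator `p₁₄₆ p₂₅₆ - p₁₅₆ p₂₄₆` is, by the three-term Plücker relation through column `6`,
equal to `p₁₂₆ p₄₅₆`, which cancels two factors and leaves `-1/(p₁₂₃p₁₃₄p₁₅₆p₂₄₆p₂₅₆p₃₄₅)`.
-/

open Matrix

section PluckerCoord

variable {R ι : Type*} [CommRing R]

def pluckerCoord (M : Matrix (Fin 3) ι R) (i j k : ι) : R :=
  det (of fun r (c : Fin 3) => M r (![i, j, k] c))

theorem pluckerCoord_swap_right (M : Matrix (Fin 3) ι R) (i j k : ι) :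
    pluckerCoord M i k j = -pluckerCoord M i j k := by
  simp only [pluckerCoord, det_fin_three, of_apply, cons_val_zero, cons_val_one, cons_val]
  ring

theorem pluckerCoord_three_term (M : Matrix (Fin 3) ι R) (a b c d e : ι) :
    pluckerCoord M a c e * pluckerCoord M b d e =
      pluckerCoord M a d e * pluckerCoord M b c e + pluckerCoord M a b e * pluckerCoord M c d e := by
  simp only [pluckerCoord, det_fin_three, of_apply, cons_val_zero, cons_val_one, cons_val]
  ring

end PluckerCoord

/-- Type I CEGM integrand decomposition:
`p₁₄₆/(p₁₂₃p₁₂₆p₁₃₄p₁₅₆p₂₆₄p₃₅₄p₄₆₅) + 1/(p₁₂₃p₁₂₆p₁₃₄p₂₅₆p₃₄₅p₄₅₆)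
  = ± 1/(p₁₂₃p₁₃₄p₁₅₆p₂₄₆p₂₅₆p₃₄₅)` for the 3×3 minors of a generic 3×6 matrix,
indices 0-based, antisymmetry built into `p` as a determinant. -/
theorem stmt15 (M : Matrix (Fin 3) (Fin 6) ℝ)
    (p : Fin 6 → Fin 6 → Fin 6 → ℝ)
    (hp : ∀ i j k, p i j k = Matrix.det (Matrix.of fun r (c : Fin 3) => M r (![i, j, k] c)))
    (hne : ∀ i j k, i < j → j < k → p i j k ≠ 0) :
    ∃ ε : ℝ, (ε = 1 ∨ ε = -1) ∧
      p 0 3 5 / (p 0 1 2 * p 0 1 5 * p 0 2 3 * p 0 4 5 * p 1 5 3 * p 2 4 3 * p 3 5 4) +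
          1 / (p 0 1 2 * p 0 1 5 * p 0 2 3 * p 1 4 5 * p 2 3 4 * p 3 4 5) =
        ε * (1 / (p 0 1 2 * p 0 2 3 * p 0 4 5 * p 1 3 5 * p 1 4 5 * p 2 3 4)) := by
  obtain rfl : p = pluckerCoord M := funext₃ hp
  refine ⟨-1, Or.inr rfl, ?_⟩
  have h012 := hne 0 1 2 (by decide) (by decide)
  have h015 := hne 0 1 5 (by decide) (by decide)
  have h023 := hne 0 2 3 (by decide) (by decide)
  have h045 := hne 0 4 5 (by decide) (by decide)
  have h135 := hne 1 3 5 (by decide) (by decide)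
  have h145 := hne 1 4 5 (by decide) (by decide)
  have h234 := hne 2 3 4 (by decide) (by decide)
  have h345 := hne 3 4 5 (by decide) (by decide)
  rw [pluckerCoord_swap_right M 1 3 5, pluckerCoord_swap_right M 2 3 4,
    pluckerCoord_swap_right M 3 4 5]
  field_simp
  linear_combination -pluckerCoord_three_term M 0 1 3 4 5
end
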